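/- Let $k$ be a finite field of cardinality $q$, $\mathbf{E}_F = k((Y))$, and let $\Gamma_F$ act on $\mathbf{E}_F$ by $\gamma(f(Y)) = f([\chi_\pi(\gamma)](Y))$, where $[a](Y) \in Y\cdot k[[Y]]$ denotes the reduction mod $\pi$ of the Lubin-Tate multiplication-by-$a$ series, with $[a](Y) \equiv \bar{a} Y \bmod Y^2$. If $\gamma \in \Gamma_F$ is nontorsion (i.e., $[\chi_\pi(\gamma)]^{\circ n}(Y) \neq Y$ for all $n \geq 1$), then the fixed field $\mathbf{E}_F^{\gamma = 1}$ equals $k$. -/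

import Mathlib

open PowerSeries

/-- Composition (substitution) of formal power series: `(w.comp' v)(Y) = w(v(Y))`,
intended for `v` with zero constant coefficient. -/
noncomputable def PowerSeries.comp' {k : Type*} [CommSemiring k] (w v : PowerSeries k) :
    PowerSeries k :=
  PowerSeries.mk fun n => ∑ i ∈ Finset.range (n + 1), coeff i w * coeff n (v ^ i)

/-- `w.iter n` is the `n`-fold composition iterate `w^{∘n}` of `w`, with `w^{∘0} = Y`. -/
noncomputable def PowerSeries.iter {k : Type*} [CommSemiring k] (w : PowerSeries k) :
    ℕ → PowerSeries k
  | 0 => X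
  | n + 1 => w.comp' (w.iter n)


section CompCalc

variable {k : Type*} [CommRing k]

theorem coeff_comp' (w v : PowerSeries k) (n : ℕ) :
    coeff n (w.comp' v) = ∑ i ∈ Finset.range (n + 1), coeff i w * coeff n (v ^ i) := by
  simp [PowerSeries.comp', coeff_mk]

theorem coeff_pow_eq_zero {v : PowerSeries k} (hv : constantCoeff v = 0) :
    ∀ {m n : ℕ}, n < m → coeff n (v ^ m) = 0 := by
  intro m
  induction m with
  | zero => omega
  | succ m ih =>
    intro n hn
    rw [pow_succ, PowerSeries.coeff_mul]
    apply Finset.sum_eq_zero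
    rintro ⟨a, b⟩ hab
    rw [Finset.HasAntidiagonal.mem_antidiagonal] at hab
    rcases Nat.eq_zero_or_pos b with hb | hb
    · subst hb
      simp [PowerSeries.coeff_zero_eq_constantCoeff, hv]
    · have : a < m := by omega
      rw [ih this, zero_mul]

theorem coeff_aeval {v : PowerSeries k} (hv : constantCoeff v = 0) (P : Polynomial k) (n : ℕ) :
    coeff n (Polynomial.aeval v P) =
      ∑ i ∈ Finset.range (n + 1), P.coeff i * coeff n (v ^ i) := by
  rw [Polynomial.aeval_eq_sum_range]
  rw [map_sum]
  set d := P.natDegree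
  have key : ∀ m : ℕ, d < m → n < m →
      ∑ i ∈ Finset.range m, coeff n (P.coeff i • v ^ i) =
        ∑ i ∈ Finset.range (n + 1), P.coeff i * coeff n (v ^ i) := by
    intro m hd hn
    rw [← Finset.sum_subset (Finset.range_subset_range.2 (by omega : n + 1 ≤ m))]
    · apply Finset.sum_congr rfl
      intro i _
      rw [PowerSeries.coeff_smul, smul_eq_mul]
    · intro i _ hi
      rw [Finset.mem_range, not_lt] at hi
      rw [PowerSeries.coeff_smul, coeff_pow_eq_zero hv (by omega), smul_zero]
  rw [← key (max d n + 1) (by omega) (by omega)]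
  rw [← Finset.sum_subset (Finset.range_subset_range.2 (by omega : d + 1 ≤ max d n + 1))]
  intro i _ hi
  rw [Finset.mem_range, not_lt] at hi
  rw [P.coeff_eq_zero_of_natDegree_lt (by omega), zero_smul, map_zero]

theorem coeff_comp'_eq_aeval_trunc {v : PowerSeries k} (hv : constantCoeff v = 0)
    (w : PowerSeries k) {n m : ℕ} (hnm : n < m) :
    coeff n (w.comp' v) = coeff n (Polynomial.aeval v (trunc m w)) := by
  rw [coeff_aeval hv, coeff_comp']
  apply Finset.sum_congr rfl
  intro i hi
  rw [Finset.mem_range] at hi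
  rw [coeff_trunc, if_pos (by omega)]

theorem comp'_mul {v : PowerSeries k} (hv : constantCoeff v = 0) (f g : PowerSeries k) :
    (f * g).comp' v = (f.comp' v) * (g.comp' v) := by
  ext n
  have h1 : coeff n ((f * g).comp' v) =
      coeff n (Polynomial.aeval v (trunc (n+1) f * trunc (n+1) g)) := by
    rw [coeff_aeval hv, coeff_comp']
    apply Finset.sum_congr rfl
    intro i hi
    rw [Finset.mem_range] at hi
    congr 1
    rw [Polynomial.coeff_mul, PowerSeries.coeff_mul]
    apply Finset.sum_congr rfl
    rintro ⟨a, b⟩ hab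
    rw [Finset.HasAntidiagonal.mem_antidiagonal] at hab
    rw [coeff_trunc, coeff_trunc, if_pos (by omega), if_pos (by omega)]
  rw [h1, map_mul, PowerSeries.coeff_mul, PowerSeries.coeff_mul]
  apply Finset.sum_congr rfl
  rintro ⟨a, b⟩ hab
  rw [Finset.HasAntidiagonal.mem_antidiagonal] at hab
  rw [← coeff_comp'_eq_aeval_trunc hv f (by omega : a < n + 1),
    ← coeff_comp'_eq_aeval_trunc hv g (by omega : b < n + 1)]

theorem comp'_C {v : PowerSeries k} (c : k) : (PowerSeries.C c).comp' v = PowerSeries.C c := by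
  ext n
  rw [coeff_comp']
  rcases Nat.eq_zero_or_pos n with hn | hn
  · subst hn; simp
  · rw [PowerSeries.coeff_C, if_neg (by omega), Finset.sum_eq_single 0]
    · simp [PowerSeries.coeff_one]
      omega
    · intro i _ hne
      rw [PowerSeries.coeff_C, if_neg hne, zero_mul]
    · intro h; exact absurd (Finset.mem_range.2 (by omega)) h

theorem comp'_one {v : PowerSeries k} : (1 : PowerSeries k).comp' v = 1 := by
  have := comp'_C (v := v) (1 : k)
  simpa using this

theorem comp'_pow {v : PowerSeries k} (hv : constantCoeff v = 0) (f : PowerSeries k) (m : ℕ) :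
    (f ^ m).comp' v = (f.comp' v) ^ m := by
  induction m with
  | zero => simpa using comp'_one
  | succ m ih => rw [pow_succ, comp'_mul hv, ih, pow_succ]

theorem comp'_add {v : PowerSeries k} (f g : PowerSeries k) :
    (f + g).comp' v = f.comp' v + g.comp' v := by
  ext n
  simp only [coeff_comp', map_add, add_mul, Finset.sum_add_distrib]

theorem constantCoeff_comp' (w v : PowerSeries k) :
    constantCoeff (w.comp' v) = constantCoeff w := by
  rw [← PowerSeries.coeff_zero_eq_constantCoeff_apply, ← PowerSeries.coeff_zero_eq_constantCoeff_apply,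
    coeff_comp']
  simp

theorem comp'_X_left {v : PowerSeries k} (hv : constantCoeff v = 0) :
    (X : PowerSeries k).comp' v = v := by
  ext n
  rw [coeff_comp']
  rcases Nat.eq_zero_or_pos n with hn | hn
  · subst hn
    simp [PowerSeries.coeff_zero_eq_constantCoeff, hv]
  · rw [Finset.sum_eq_single 1]
    · simp
    · intro i hi hne
      rw [PowerSeries.coeff_X, if_neg hne, zero_mul]
    · intro h
      exfalso; apply h
      rw [Finset.mem_range]; omega

theorem comp'_X_right (w : PowerSeries k) : w.comp' X = w := by
  ext n
  rw [coeff_comp', Finset.sum_eq_single n]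
  · rw [PowerSeries.X_pow_eq, PowerSeries.coeff_monomial, if_pos rfl, mul_one]
  · intro i hi hne
    rw [PowerSeries.X_pow_eq, PowerSeries.coeff_monomial, if_neg (fun h => hne h.symm), mul_zero]
  · intro h; exfalso; apply h; rw [Finset.mem_range]; omega

theorem comp'_aeval {v t : PowerSeries k} (ht : constantCoeff t = 0) (P : Polynomial k) :
    (Polynomial.aeval v P : PowerSeries k).comp' t = Polynomial.aeval (v.comp' t) P := by
  induction P using Polynomial.induction_on' with
  | add f g hf hg => rw [map_add, comp'_add, hf, hg, map_add]
  | monomial m c =>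
    rw [Polynomial.aeval_monomial, Polynomial.aeval_monomial]
    rw [comp'_mul ht, comp'_pow ht]
    congr 1
    have : (algebraMap k (PowerSeries k)) c = PowerSeries.C c := by
      rw [PowerSeries.algebraMap_apply]; simp
    rw [this, comp'_C]

theorem comp'_assoc {w v t : PowerSeries k} (hv : constantCoeff v = 0)
    (ht : constantCoeff t = 0) :
    (w.comp' v).comp' t = w.comp' (v.comp' t) := by
  have hvt : constantCoeff (v.comp' t) = 0 := by rw [constantCoeff_comp', hv]
  ext n
  rw [coeff_comp'_eq_aeval_trunc ht (w.comp' v) (by omega : n < n + 1)]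
  have htr : trunc (n + 1) (w.comp' v) =
      trunc (n + 1) (Polynomial.aeval v (trunc (n + 1) w) : PowerSeries k) := by
    apply Polynomial.ext
    intro j
    rw [coeff_trunc, coeff_trunc]
    rcases lt_or_ge j (n + 1) with hj | hj
    · rw [if_pos hj, if_pos hj, coeff_comp'_eq_aeval_trunc hv w hj]
    · rw [if_neg (by omega), if_neg (by omega)]
  rw [htr, ← coeff_comp'_eq_aeval_trunc ht _ (by omega : n < n + 1), comp'_aeval ht,
    ← coeff_comp'_eq_aeval_trunc hvt w (by omega : n < n + 1)]

end CompCalc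

section IterDepth

variable {k : Type*} [CommRing k]

theorem constantCoeff_iter {u : PowerSeries k} (hu : PowerSeries.constantCoeff u = 0) (n : ℕ) :
    PowerSeries.constantCoeff (u.iter n) = 0 := by
  induction n with
  | zero => exact PowerSeries.constantCoeff_X
  | succ n _ => rw [PowerSeries.iter, constantCoeff_comp', hu]

theorem iter_comp {u : PowerSeries k} (hu : PowerSeries.constantCoeff u = 0) (m n : ℕ) :
    u.iter (m + n) = (u.iter m).comp' (u.iter n) := by
  induction m with
  | zero =>
    rw [Nat.zero_add]
    exact (comp'_X_left (constantCoeff_iter hu n)).symm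
  | succ m ih =>
    have : m + 1 + n = (m + n) + 1 := by omega
    rw [this, PowerSeries.iter, ih, PowerSeries.iter,
      comp'_assoc (constantCoeff_iter hu m) (constantCoeff_iter hu n)]

theorem iter_mul {u : PowerSeries k} (hu : PowerSeries.constantCoeff u = 0) (a b : ℕ) :
    u.iter (a * b) = (u.iter a).iter b := by
  induction b with
  | zero => rw [Nat.mul_zero]; rfl
  | succ b ih =>
    have : a * (b + 1) = a + a * b := by ring
    rw [this, iter_comp hu, PowerSeries.iter, ih]

theorem coeff_one_comp' (w v : PowerSeries k) :
    PowerSeries.coeff 1 (w.comp' v) = PowerSeries.coeff 1 w * PowerSeries.coeff 1 v := by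
  rw [coeff_comp']
  rw [Finset.sum_range_succ, Finset.sum_range_one]
  simp [PowerSeries.coeff_one]

theorem deep_mul_aux {v : PowerSeries k} {i : ℕ} (hi : 1 ≤ i)
    (h0 : PowerSeries.constantCoeff v = 0) (h1 : PowerSeries.coeff 1 v = 1)
    (hmid : ∀ r, 2 ≤ r → r ≤ i → PowerSeries.coeff r v = 0)
    {A : PowerSeries k} {j : ℕ} (hj : 1 ≤ j)
    (hA : ∀ a, a ≤ i → PowerSeries.coeff a A = if a = j then 1 else 0) :
    ∀ n, n ≤ i + 1 → PowerSeries.coeff n (A * v) = if n = j + 1 then 1 else 0 := by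
  intro n hn
  rw [PowerSeries.coeff_mul]
  have hterm : ∀ ab ∈ Finset.HasAntidiagonal.antidiagonal n, ab ≠ (j, 1) →
      PowerSeries.coeff ab.1 A * PowerSeries.coeff ab.2 v = 0 := by
    rintro ⟨a, b⟩ hab hne
    rw [Finset.HasAntidiagonal.mem_antidiagonal] at hab
    rcases Nat.lt_or_ge b 2 with hb | hb
    · interval_cases b
      · rw [PowerSeries.coeff_zero_eq_constantCoeff_apply, h0, mul_zero]
      · have ha : a ≠ j := fun h => hne (by rw [h])
        rw [hA a (by omega), if_neg ha, zero_mul]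
    · rcases Nat.lt_or_ge b (i + 1) with hb2 | hb2
      · rw [hmid b hb (by omega), mul_zero]
      · have ha : a = 0 := by omega
        subst ha
        rw [hA 0 (by omega), if_neg (by omega), zero_mul]
  by_cases hcase : n = j + 1
  · subst hcase
    rw [Finset.sum_eq_single (j, 1) hterm
      (fun h => absurd (by simp : ((j : ℕ), (1 : ℕ)) ∈ Finset.HasAntidiagonal.antidiagonal (j + 1)) h)]
    rw [hA j (by omega), if_pos rfl, h1, one_mul, if_pos rfl]
  · rw [if_neg hcase, Finset.sum_eq_zero]
    rintro ⟨a, b⟩ hab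
    refine hterm _ hab fun heq => ?_
    rw [Finset.HasAntidiagonal.mem_antidiagonal] at hab
    simp only [Prod.mk.injEq] at heq
    exact hcase (by omega)

theorem deep_pow {v : PowerSeries k} {i : ℕ} (hi : 1 ≤ i)
    (h0 : PowerSeries.constantCoeff v = 0) (h1 : PowerSeries.coeff 1 v = 1)
    (hmid : ∀ r, 2 ≤ r → r ≤ i → PowerSeries.coeff r v = 0) :
    ∀ j, 2 ≤ j → ∀ n, n ≤ i + 1 → PowerSeries.coeff n (v ^ j) = if n = j then 1 else 0 := by
  intro j hj
  induction j, hj using Nat.le_induction with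
  | base =>
    intro n hn
    rw [pow_two]
    apply deep_mul_aux hi h0 h1 hmid le_rfl _ n hn
    intro a ha
    rcases Nat.lt_or_ge a 2 with h | h
    · interval_cases a
      · rw [PowerSeries.coeff_zero_eq_constantCoeff_apply, h0, if_neg (by omega)]
      · rw [h1, if_pos rfl]
    · rw [hmid a h ha, if_neg (by omega)]
  | succ j hj2 ih =>
    intro n hn
    rw [pow_succ]
    exact deep_mul_aux hi h0 h1 hmid (by omega)
      (fun a ha => ih a (by omega)) n hn

theorem deep_comp' {w v : PowerSeries k} {i : ℕ} (hi : 1 ≤ i)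
    (hw1 : PowerSeries.coeff 1 w = 1)
    (hv0 : PowerSeries.constantCoeff v = 0) (hv1 : PowerSeries.coeff 1 v = 1)
    (hvmid : ∀ r, 2 ≤ r → r ≤ i → PowerSeries.coeff r v = 0) :
    ∀ n, 2 ≤ n → n ≤ i + 1 →
      PowerSeries.coeff n (w.comp' v) = PowerSeries.coeff n w + PowerSeries.coeff n v := by
  intro n h2 hn
  rw [coeff_comp']
  have hsub : ({1, n} : Finset ℕ) ⊆ Finset.range (n + 1) := by
    intro x hx
    simp only [Finset.mem_insert, Finset.mem_singleton] at hx
    rcases hx with rfl | rfl <;> (rw [Finset.mem_range]; omega)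
  rw [← Finset.sum_subset hsub]
  · rw [Finset.sum_pair (by omega : (1 : ℕ) ≠ n), hw1, one_mul, pow_one,
      deep_pow hi hv0 hv1 hvmid n h2 n hn, if_pos rfl, mul_one, add_comm]
  · intro j hj hj2
    simp only [Finset.mem_insert, Finset.mem_singleton, not_or] at hj2
    rw [Finset.mem_range] at hj
    rcases Nat.lt_or_ge j 2 with h | h
    · interval_cases j
      · rw [pow_zero, PowerSeries.coeff_one, if_neg (by omega), mul_zero]
      · exact absurd rfl hj2.1
    · rw [deep_pow hi hv0 hv1 hvmid j h n hn, if_neg (fun hh => hj2.2 hh.symm), mul_zero]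

theorem iter_deep {W : PowerSeries k} {i : ℕ} (hi : 1 ≤ i)
    (h0 : PowerSeries.constantCoeff W = 0) (h1 : PowerSeries.coeff 1 W = 1)
    (hmid : ∀ r, 2 ≤ r → r ≤ i → PowerSeries.coeff r W = 0) (m : ℕ) :
    PowerSeries.constantCoeff (W.iter m) = 0 ∧ PowerSeries.coeff 1 (W.iter m) = 1 ∧
    (∀ r, 2 ≤ r → r ≤ i → PowerSeries.coeff r (W.iter m) = 0) ∧
    PowerSeries.coeff (i + 1) (W.iter m) = (m : k) * PowerSeries.coeff (i + 1) W := by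
  induction m with
  | zero =>
    refine ⟨PowerSeries.constantCoeff_X, ?_, ?_, ?_⟩
    · show PowerSeries.coeff 1 X = 1
      simp
    · intro r h2 _
      show PowerSeries.coeff r X = 0
      rw [PowerSeries.coeff_X, if_neg (by omega)]
    · show PowerSeries.coeff (i + 1) (X : PowerSeries k) = (0 : ℕ) * PowerSeries.coeff (i + 1) W
      rw [PowerSeries.coeff_X, if_neg (by omega)]
      simp
  | succ m ih =>
    obtain ⟨ih0, ih1, ihmid, ihtop⟩ := ih
    refine ⟨?_, ?_, ?_, ?_⟩
    · rw [PowerSeries.iter, constantCoeff_comp', h0]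
    · rw [PowerSeries.iter, coeff_one_comp', h1, ih1, one_mul]
    · intro r h2 hr
      rw [PowerSeries.iter, deep_comp' hi h1 ih0 ih1 ihmid r h2 (by omega), hmid r h2 hr,
        ihmid r h2 hr, add_zero]
    · rw [PowerSeries.iter, deep_comp' hi h1 ih0 ih1 ihmid (i + 1) (by omega) le_rfl, ihtop]
      push_cast
      ring

end IterDepth

section Core

variable {p : ℕ} [Fact p.Prime] {k : Type*} [Field k] [CharP k p]

theorem coeff_pow_lt_of_low {k : Type*} [CommRing k] {A : PowerSeries k} {s : ℕ}
    (hA : ∀ j, j < s → PowerSeries.coeff j A = 0) :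
    ∀ t j, j < t * s → PowerSeries.coeff j (A ^ t) = 0 := by
  intro t
  induction t with
  | zero => omega
  | succ t ih =>
    intro j hj
    rw [pow_succ, PowerSeries.coeff_mul]
    apply Finset.sum_eq_zero
    rintro ⟨a, b⟩ hab
    rw [Finset.HasAntidiagonal.mem_antidiagonal] at hab
    rcases Nat.lt_or_ge a (t * s) with ha | ha
    · rw [ih a ha, zero_mul]
    · have hb : b < s := by
        have := hj
        rw [Nat.succ_mul] at this
        omega
      rw [hA b hb, mul_zero]

theorem lemA {S : PowerSeries k} {i : ℕ} (hS : ∀ j, j < i → PowerSeries.coeff j (S - 1) = 0) :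
    ∀ m : ℕ, ∀ j, j < i → PowerSeries.coeff j (S ^ m - 1) = 0 := by
  intro m
  induction m with
  | zero => intro j _; simp
  | succ m ih =>
    intro j hj
    have key : S ^ (m + 1) - 1 = S ^ m * (S - 1) + (S ^ m - 1) := by ring
    rw [key, map_add, ih j hj, add_zero, PowerSeries.coeff_mul]
    apply Finset.sum_eq_zero
    rintro ⟨a, b⟩ hab
    rw [Finset.HasAntidiagonal.mem_antidiagonal] at hab
    rw [hS b (by omega), mul_zero]

theorem lemB {S : PowerSeries k} {i : ℕ} (hS : ∀ j, j < i → PowerSeries.coeff j (S - 1) = 0) :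
    ∀ m : ℕ, ∀ j, j < 2 * i →
      PowerSeries.coeff j (S ^ m - 1 - PowerSeries.C (m : k) * (S - 1)) = 0 := by
  intro m
  induction m with
  | zero => intro j _; simp
  | succ m ih =>
    intro j hj
    have key : S ^ (m + 1) - 1 - PowerSeries.C ((m + 1 : ℕ) : k) * (S - 1) =
        (S ^ m - 1 - PowerSeries.C (m : k) * (S - 1)) + (S ^ m - 1) * (S - 1) := by
      push_cast
      rw [map_add, map_one]
      ring
    rw [key, map_add, ih j hj, zero_add, PowerSeries.coeff_mul]
    apply Finset.sum_eq_zero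
    rintro ⟨a, b⟩ hab
    rw [Finset.HasAntidiagonal.mem_antidiagonal] at hab
    rcases Nat.lt_or_ge a i with ha | ha
    · rw [lemA hS m a ha, zero_mul]
    · rw [hS b (by omega), mul_zero]

theorem core_contradiction (W G : PowerSeries k) (M dG i : ℕ)
    (hW0 : PowerSeries.constantCoeff W = 0) (hW1 : PowerSeries.coeff 1 W = 1)
    (hdeep : ∀ r, 2 ≤ r → r ≤ i → PowerSeries.coeff r W = 0)
    (hb : PowerSeries.coeff (i + 1) W ≠ 0)
    (hi : dG + 1 ≤ i)
    (heq : PowerSeries.X ^ M * (G.comp' W) = W ^ M * G)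
    (hd : PowerSeries.coeff dG G ≠ 0)
    (hdp : ¬ (p : ℤ) ∣ ((dG : ℤ) - (M : ℤ)))
    (hmin : ∀ m, m < dG → PowerSeries.coeff m G ≠ 0 → (p : ℤ) ∣ ((m : ℤ) - (M : ℤ))) :
    False := by
  obtain ⟨S, hWS⟩ : (PowerSeries.X : PowerSeries k) ∣ W := PowerSeries.X_dvd_iff.2 hW0
  have hScoeff : ∀ j, PowerSeries.coeff j S = PowerSeries.coeff (j + 1) W := by
    intro j
    rw [hWS, PowerSeries.coeff_succ_X_mul]
  have hT : ∀ j, j < i → PowerSeries.coeff j (S - 1) = 0 := by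
    intro j hj
    rw [map_sub, hScoeff]
    rcases Nat.eq_zero_or_pos j with rfl | hj0
    · rw [PowerSeries.coeff_one, if_pos rfl]
      rw [hW1]; ring
    · rw [PowerSeries.coeff_one, if_neg (by omega), hdeep (j + 1) (by omega) (by omega)]
      ring
  have hTi : PowerSeries.coeff i (S - 1) = PowerSeries.coeff (i + 1) W := by
    rw [map_sub, hScoeff, PowerSeries.coeff_one, if_neg (by omega), sub_zero]
  -- cancel X^M
  have hcan : G.comp' W = G * S ^ M := by
    have h2 : PowerSeries.X ^ M * (G.comp' W) = PowerSeries.X ^ M * (G * S ^ M) := by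
      rw [heq, hWS, mul_pow]
      ring
    exact mul_left_cancel₀ (pow_ne_zero M PowerSeries.X_ne_zero) h2
  set n := dG + i with hn
  have h2i : n < 2 * i := by omega
  -- term formula helper
  have hform : ∀ a e : ℕ, a ≤ n → PowerSeries.coeff a (S ^ e) =
      (e : k) * PowerSeries.coeff a (S - 1) + (if a = 0 then 1 else 0) := by
    intro a e ha
    have split : S ^ e = (S ^ e - 1 - PowerSeries.C (e : k) * (S - 1)) +
        (PowerSeries.C (e : k) * (S - 1) + 1) := by ring
    rw [split, map_add, lemB hT e a (by omega), zero_add, map_add, PowerSeries.coeff_C_mul,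
      PowerSeries.coeff_one]
  -- coefficient extraction at n
  have hLHS : PowerSeries.coeff n (G.comp' W) =
      ∑ m ∈ Finset.range (n + 1),
        PowerSeries.coeff m G * ((m : k) * PowerSeries.coeff (n - m) (S - 1)) +
      PowerSeries.coeff n G := by
    rw [coeff_comp']
    have : ∀ m ∈ Finset.range (n + 1),
        PowerSeries.coeff m G * PowerSeries.coeff n (W ^ m) =
        PowerSeries.coeff m G * ((m : k) * PowerSeries.coeff (n - m) (S - 1)) +
        (if m = n then PowerSeries.coeff n G else 0) := by
      intro m hm
      rw [Finset.mem_range] at hm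
      have hmn : m ≤ n := by omega
      rw [hWS, mul_pow, PowerSeries.coeff_X_pow_mul', if_pos hmn,
        hform (n - m) m (by omega)]
      have : (if n - m = 0 then (1 : k) else 0) = if m = n then 1 else 0 := by
        by_cases h : m = n
        · rw [if_pos h, if_pos (by omega)]
        · rw [if_neg h, if_neg (by omega)]
      rw [this, mul_add]
      congr 1
      by_cases h : m = n
      · rw [if_pos h, if_pos h, mul_one, h]
      · rw [if_neg h, if_neg h, mul_zero]
    rw [Finset.sum_congr rfl this, Finset.sum_add_distrib, Finset.sum_ite_eq' (Finset.range (n+1))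
      n (fun _ => PowerSeries.coeff n G), if_pos (Finset.self_mem_range_succ n)]
  have hRHS : PowerSeries.coeff n (G * S ^ M) =
      ∑ m ∈ Finset.range (n + 1),
        PowerSeries.coeff m G * ((M : k) * PowerSeries.coeff (n - m) (S - 1)) +
      PowerSeries.coeff n G := by
    rw [PowerSeries.coeff_mul, Finset.Nat.sum_antidiagonal_eq_sum_range_succ
      (fun a b => PowerSeries.coeff a G * PowerSeries.coeff b (S ^ M))]
    have : ∀ m ∈ Finset.range (n + 1),
        PowerSeries.coeff m G * PowerSeries.coeff (n - m) (S ^ M) =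
        PowerSeries.coeff m G * ((M : k) * PowerSeries.coeff (n - m) (S - 1)) +
        (if m = n then PowerSeries.coeff n G else 0) := by
      intro m hm
      rw [Finset.mem_range] at hm
      rw [hform (n - m) M (by omega)]
      have : (if n - m = 0 then (1 : k) else 0) = if m = n then 1 else 0 := by
        by_cases h : m = n
        · rw [if_pos h, if_pos (by omega)]
        · rw [if_neg h, if_neg (by omega)]
      rw [this, mul_add]
      congr 1
      by_cases h : m = n
      · rw [if_pos h, if_pos h, mul_one, h]
      · rw [if_neg h, if_neg h, mul_zero]
    rw [Finset.sum_congr rfl this, Finset.sum_add_distrib, Finset.sum_ite_eq' (Finset.range (n+1))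
      n (fun _ => PowerSeries.coeff n G), if_pos (Finset.self_mem_range_succ n)]
  have hsums : ∑ m ∈ Finset.range (n + 1),
      PowerSeries.coeff m G * ((m : k) * PowerSeries.coeff (n - m) (S - 1)) =
      ∑ m ∈ Finset.range (n + 1),
        PowerSeries.coeff m G * ((M : k) * PowerSeries.coeff (n - m) (S - 1)) := by
    have := congrArg (PowerSeries.coeff n) hcan
    rw [hLHS, hRHS] at this
    exact add_right_cancel this
  have hzero : ∑ m ∈ Finset.range (n + 1),
      PowerSeries.coeff m G * (((m : k) - (M : k)) * PowerSeries.coeff (n - m) (S - 1))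
      = 0 := by
    have : ∀ m ∈ Finset.range (n + 1),
        PowerSeries.coeff m G * (((m : k) - (M : k)) * PowerSeries.coeff (n - m) (S - 1)) =
        PowerSeries.coeff m G * ((m : k) * PowerSeries.coeff (n - m) (S - 1)) -
        PowerSeries.coeff m G * ((M : k) * PowerSeries.coeff (n - m) (S - 1)) := by
      intro m _; ring
    rw [Finset.sum_congr rfl this, Finset.sum_sub_distrib, hsums, sub_self]
  -- evaluate the sum
  rw [Finset.sum_eq_single dG] at hzero
  · have hne1 : ((dG : k) - (M : k)) ≠ 0 := by
      intro h
      apply hdp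
      rw [← CharP.intCast_eq_zero_iff k p]
      push_cast
      exact h
    have : n - dG = i := by omega
    rw [this, hTi] at hzero
    exact (mul_ne_zero hd (mul_ne_zero hne1 hb)) hzero
  · intro m hm hne
    rw [Finset.mem_range] at hm
    rcases Nat.lt_or_ge m dG with hlt | hgt
    · by_cases hG : PowerSeries.coeff m G = 0
      · rw [hG, zero_mul]
      · have := hmin m hlt hG
        have hcast : ((m : k) - (M : k)) = 0 := by
          have : (((m : ℤ) - (M : ℤ) : ℤ) : k) = 0 := (CharP.intCast_eq_zero_iff k p _).2 this
          push_cast at this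
          exact this
        rw [hcast, zero_mul, mul_zero]
    · have hmg : dG < m := by omega
      have : n - m < i := by omega
      rw [hT (n - m) this, mul_zero, mul_zero]
  · intro h
    exact absurd (Finset.mem_range.2 (by omega)) h

theorem coeff_pow_char (φ : PowerSeries k) (n : ℕ) :
    PowerSeries.coeff n (φ ^ p) =
      if p ∣ n then (PowerSeries.coeff (n / p) φ) ^ p else 0 := by
  have hp : p.Prime := Fact.out
  haveI : CharP (PowerSeries k) p :=
    charP_of_injective_ringHom (PowerSeries.C_injective (R := k)) p
  set P := PowerSeries.trunc (n + 1) φ with hP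
  have hlow : ∀ j, j < n + 1 → PowerSeries.coeff j (φ - (P : PowerSeries k)) = 0 := by
    intro j hj
    rw [map_sub, Polynomial.coeff_coe, PowerSeries.coeff_trunc, if_pos hj, sub_self]
  have hsplit : φ ^ p = ((P : PowerSeries k)) ^ p + (φ - (P : PowerSeries k)) ^ p := by
    rw [sub_pow_char]
    ring
  have hhigh : PowerSeries.coeff n ((φ - (P : PowerSeries k)) ^ p) = 0 := by
    apply coeff_pow_lt_of_low hlow p n
    have : 1 ≤ p := hp.one_lt.le.trans' (by omega)
    calc n < n + 1 := by omega
    _ ≤ p * (n + 1) := Nat.le_mul_of_pos_left _ (by omega)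
  rw [hsplit, map_add, hhigh, add_zero, ← Polynomial.coe_pow, Polynomial.coeff_coe]
  haveI : ExpChar k p := ExpChar.prime hp
  rw [← Polynomial.map_frobenius_expand, Polynomial.coeff_map, Polynomial.coeff_expand hp.pos,
    frobenius_def]
  by_cases h : p ∣ n
  · rw [if_pos h, if_pos h, hP, PowerSeries.coeff_trunc, if_pos (Nat.lt_succ_of_le (Nat.div_le_self n p))]
  · rw [if_neg h, if_neg h, zero_pow hp.ne_zero]

theorem exists_pth_root_powerSeries [PerfectRing k p] (G : PowerSeries k)
    (hG : ∀ n, PowerSeries.coeff n G ≠ 0 → p ∣ n) :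
    ∃ H : PowerSeries k, H ^ p = G := by
  refine ⟨PowerSeries.mk fun n => (frobeniusEquiv k p).symm (PowerSeries.coeff (p * n) G), ?_⟩
  ext n
  rw [coeff_pow_char]
  by_cases h : p ∣ n
  · rw [if_pos h, PowerSeries.coeff_mk]
    have hcancel : p * (n / p) = n := Nat.mul_div_cancel' h
    rw [hcancel]
    exact (frobeniusEquiv k p).apply_symm_apply _
  · rw [if_neg h]
    by_contra hne
    exact h (hG n fun h0 => hne (by rw [h0]))

end Core

section LaurentLayer

variable {k : Type*} [Field k]

theorem ofPS_shift (g : LaurentSeries k) (M : ℕ)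
    (hM : ∀ t : ℤ, t < 0 → g.coeff (t - (M : ℤ)) = 0) :
    HahnSeries.ofPowerSeries ℤ k (PowerSeries.mk fun n => g.coeff ((n : ℤ) - (M : ℤ))) =
      HahnSeries.ofPowerSeries ℤ k (PowerSeries.X ^ M) * g := by
  rw [HahnSeries.ofPowerSeries_X_pow]
  ext t
  have hR : (HahnSeries.single (M : ℤ) (1 : k) * g).coeff t = g.coeff (t - (M : ℤ)) := by
    have ht : t = (t - (M : ℤ)) + (M : ℤ) := by ring
    rw [ht, HahnSeries.coeff_single_mul_add, one_mul]
    congr 1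
    omega
  rw [hR]
  rcases lt_or_ge t 0 with ht | ht
  · rw [PowerSeries.coeff_coe, if_pos ht, hM t ht]
  · obtain ⟨n, rfl⟩ : ∃ n : ℕ, t = (n : ℤ) := ⟨t.toNat, (Int.toNat_of_nonneg ht).symm⟩
    rw [HahnSeries.ofPowerSeries_apply_coeff, PowerSeries.coeff_mk]

end LaurentLayer


/-- the fixed field of a nontorsion automorphism `γ` of `k((Y))` acting by
`f(Y) ↦ f(u(Y))` for an invertible nontorsion `u ∈ Y·k[[Y]]` is `k`. -/
theorem fixed_field_eq_constants {p : ℕ} [Fact p.Prime] {k : Type*} [Field k] [CharP k p]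
    [Fintype k] (q : ℕ) (hq : Fintype.card k = q)
    (u : PowerSeries k) (hu0 : constantCoeff u = 0) (hu1 : coeff 1 u ≠ 0)
    (hunt : ∀ n : ℕ, 1 ≤ n → u.iter n ≠ X)
    (γ : LaurentSeries k ≃ₐ[k] LaurentSeries k)
    (hγ : ∀ g : PowerSeries k,
      γ (HahnSeries.ofPowerSeries ℤ k g) = HahnSeries.ofPowerSeries ℤ k (g.comp' u)) :
    ∀ f : LaurentSeries k, γ f = f → ∃ c : k, f = HahnSeries.C c := by
  classical
  have hp : p.Prime := Fact.out
  haveI : CharP (LaurentSeries k) p :=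
    charP_of_injective_ringHom (HahnSeries.C_injective (R := k) (Γ := ℤ)) p
  haveI : ExpChar k p := ExpChar.prime hp
  haveI : PerfectRing k p := PerfectField.toPerfectRing (K := k) p
  have hq2 : 2 ≤ q := by rw [← hq]; exact Fintype.one_lt_card
  set ofPS := HahnSeries.ofPowerSeries ℤ k with hofPS
  have hfixC : ∀ c : k, γ (HahnSeries.C c) = HahnSeries.C c := by
    intro c
    have h1 := hγ (PowerSeries.C c)
    rw [comp'_C] at h1
    rwa [hofPS, HahnSeries.ofPowerSeries_C] at h1
  -- iterate facts
  have hiter0 : ∀ n, PowerSeries.constantCoeff (u.iter n) = 0 := constantCoeff_iter hu0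
  have hcoeff1iter : ∀ n, PowerSeries.coeff 1 (u.iter n) = (PowerSeries.coeff 1 u) ^ n := by
    intro n
    induction n with
    | zero =>
      show PowerSeries.coeff 1 (PowerSeries.X : PowerSeries k) = _
      simp
    | succ n ih => rw [PowerSeries.iter, coeff_one_comp', ih, pow_succ, mul_comm]
  -- the basic deep iterate
  set W₀ : PowerSeries k := u.iter (q - 1) with hW₀
  have hW₀0 : PowerSeries.constantCoeff W₀ = 0 := hiter0 _
  have hW₀1 : PowerSeries.coeff 1 W₀ = 1 := by
    rw [hW₀, hcoeff1iter, ← hq]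
    exact FiniteField.pow_card_sub_one_eq_one _ hu1
  have depth : ∀ e : ℕ, PowerSeries.constantCoeff (W₀.iter (p ^ e)) = 0 ∧
      PowerSeries.coeff 1 (W₀.iter (p ^ e)) = 1 ∧
      (∀ r, 2 ≤ r → r ≤ e + 1 → PowerSeries.coeff r (W₀.iter (p ^ e)) = 0) := by
    intro e
    induction e with
    | zero =>
      have h1 : W₀.iter (p ^ 0) = W₀ := by
        show W₀.comp' (W₀.iter 0) = W₀
        exact comp'_X_right W₀
      rw [h1]
      exact ⟨hW₀0, hW₀1, fun r h2 hr => by omega⟩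
    | succ e ih =>
      obtain ⟨ih0, ih1, ihmid⟩ := ih
      have hstep : W₀.iter (p ^ (e + 1)) = (W₀.iter (p ^ e)).iter p := by
        rw [pow_succ, iter_mul hW₀0]
      obtain ⟨j0, j1, jmid, jtop⟩ :=
        iter_deep (i := e + 1) (by omega) ih0 ih1 ihmid p
      rw [hstep]
      refine ⟨j0, j1, fun r h2 hr => ?_⟩
      rcases Nat.lt_or_ge r (e + 2) with h | h
      · exact jmid r h2 (by omega)
      · have hre : r = e + 2 := by omega
        rw [hre, show e + 2 = (e + 1) + 1 from rfl, jtop, CharP.cast_eq_zero, zero_mul]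
  -- γ powers
  have hγpow : ∀ (N : ℕ) (g : PowerSeries k),
      (γ ^ N) (ofPS g) = ofPS (g.comp' (u.iter N)) := by
    intro N
    induction N with
    | zero =>
      intro g
      rw [pow_zero, AlgEquiv.one_apply]
      show ofPS g = ofPS (g.comp' PowerSeries.X)
      rw [comp'_X_right]
    | succ N ih =>
      intro g
      rw [pow_succ, AlgEquiv.mul_apply, hγ, ih, comp'_assoc hu0 (hiter0 N)]
      rfl
  have hfix_pow : ∀ (N : ℕ) (g : LaurentSeries k), γ g = g → (γ ^ N) g = g := by
    intro N g hg
    induction N with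
    | zero => rw [pow_zero, AlgEquiv.one_apply]
    | succ N ih => rw [pow_succ, AlgEquiv.mul_apply, hg, ih]
  -- main descent
  have main : ∀ nb : ℕ, ∀ g : LaurentSeries k, g.order.natAbs ≤ nb → γ g = g →
      g.coeff 0 = 0 → g = 0 := by
    intro nb
    induction nb using Nat.strong_induction_on with
    | _ nb IH =>
      intro g hord hfix h0
      by_contra hg0
      have hordne : g.order ≠ 0 := by
        intro hoz
        exact (mt HahnSeries.coeff_order_eq_zero.1 hg0) (by rw [hoz]; exact h0)
      by_cases hstray : ∃ t : ℤ, g.coeff t ≠ 0 ∧ ¬ (p : ℤ) ∣ t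
      · -- contradiction via the core lemma
        obtain ⟨d, ⟨hdne, hdnd⟩, hdmin⟩ := Int.exists_least_of_bdd
          (P := fun t => g.coeff t ≠ 0 ∧ ¬ (p : ℤ) ∣ t)
          ⟨g.order, fun z hz => HahnSeries.order_le_of_coeff_ne_zero hz.1⟩ hstray
        have hdord : g.order ≤ d := HahnSeries.order_le_of_coeff_ne_zero hdne
        set M : ℕ := g.order.natAbs + 1 with hM
        have hshift : ∀ t : ℤ, t < 0 → g.coeff (t - (M : ℤ)) = 0 := by
          intro t ht
          apply HahnSeries.coeff_eq_zero_of_lt_order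
          omega
        set G : PowerSeries k := PowerSeries.mk fun n => g.coeff ((n : ℤ) - (M : ℤ)) with hG
        have hxg : ofPS G = ofPS (PowerSeries.X ^ M) * g := ofPS_shift g M hshift
        have hd0 : (0 : ℤ) ≤ d + M := by omega
        set dG : ℕ := (d + (M : ℤ)).toNat with hdG
        have hdGZ : (dG : ℤ) = d + M := Int.toNat_of_nonneg hd0
        set e : ℕ := dG with he
        set N : ℕ := (q - 1) * p ^ e with hN
        have hN1 : 1 ≤ N := by
          have h1 : 1 ≤ q - 1 := by omega
          have h2 : 0 < p ^ e := Nat.pow_pos hp.pos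
          calc 1 = 1 * 1 := by ring
          _ ≤ (q - 1) * p ^ e := Nat.mul_le_mul h1 h2
        set W : PowerSeries k := u.iter N with hW
        have hNW : W = W₀.iter (p ^ e) := iter_mul hu0 (q - 1) (p ^ e)
        obtain ⟨hV0, hV1, hVmid⟩ := depth e
        have hW0c : PowerSeries.constantCoeff W = 0 := by rw [hNW]; exact hV0
        have hW1c : PowerSeries.coeff 1 W = 1 := by rw [hNW]; exact hV1
        have hWmid : ∀ r, 2 ≤ r → r ≤ e + 1 → PowerSeries.coeff r W = 0 := by
          intro r h2 hr; rw [hNW]; exact hVmid r h2 hr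
        have hWX : W ≠ PowerSeries.X := hunt N hN1
        have hex : ∃ r, PowerSeries.coeff r (W - PowerSeries.X) ≠ 0 := by
          by_contra hc
          push_neg at hc
          apply hWX
          have hz : W - PowerSeries.X = 0 := by
            ext r; rw [hc r]; simp
          linear_combination hz
        set io := Nat.find hex with hio
        have hiospec : PowerSeries.coeff io (W - PowerSeries.X) ≠ 0 := Nat.find_spec hex
        have hiomin : ∀ r, r < io → PowerSeries.coeff r (W - PowerSeries.X) = 0 := by
          intro r hr
          exact not_not.mp (Nat.find_min hex hr)
        have hcoeffWX : ∀ r, r ≠ 1 →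
            PowerSeries.coeff r (W - PowerSeries.X) = PowerSeries.coeff r W := by
          intro r hr
          rw [map_sub, PowerSeries.coeff_X, if_neg hr, sub_zero]
        have hio_ge : e + 2 ≤ io := by
          by_contra hc
          push_neg at hc
          apply hiospec
          rcases Nat.lt_or_ge io 2 with h2 | h2
          · interval_cases io
            · rw [map_sub, PowerSeries.coeff_zero_eq_constantCoeff_apply,
                PowerSeries.coeff_zero_eq_constantCoeff_apply, hW0c]
              simp [PowerSeries.constantCoeff_X]
            · rw [map_sub, hW1c]
              simp
          · rw [hcoeffWX io (by omega), hWmid io h2 (by omega)]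
        set i : ℕ := io - 1 with hi
        have hi1 : dG + 1 ≤ i := by omega
        have hdeepW : ∀ r, 2 ≤ r → r ≤ i → PowerSeries.coeff r W = 0 := by
          intro r h2 hr
          rw [← hcoeffWX r (by omega)]
          exact hiomin r (by omega)
        have hbW : PowerSeries.coeff (i + 1) W ≠ 0 := by
          have hieq : i + 1 = io := by omega
          rw [hieq, ← hcoeffWX io (by omega)]
          exact hiospec
        -- the equation
        have hfixN : (γ ^ N) g = g := hfix_pow N g hfix
        have h1 : (γ ^ N) (ofPS G) = ofPS (G.comp' W) := hγpow N G
        have h2 : (γ ^ N) (ofPS (PowerSeries.X ^ M)) = ofPS (W ^ M) := by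
          rw [hγpow N (PowerSeries.X ^ M), comp'_pow hW0c, comp'_X_left hW0c]
        have h3 : ofPS (G.comp' W) = ofPS (W ^ M) * g := by
          rw [← h1, hxg, map_mul, h2, hfixN]
        have h4 : ofPS (PowerSeries.X ^ M * (G.comp' W)) = ofPS (W ^ M * G) := by
          rw [map_mul, map_mul, h3, ← mul_assoc,
            mul_comm (ofPS (PowerSeries.X ^ M)) (ofPS (W ^ M)), mul_assoc, ← hxg]
        have heq : PowerSeries.X ^ M * (G.comp' W) = W ^ M * G :=
          HahnSeries.ofPowerSeries_injective h4
        -- core hypotheses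
        have hdcoeff : PowerSeries.coeff dG G ≠ 0 := by
          rw [hG, PowerSeries.coeff_mk]
          have hrw : (dG : ℤ) - (M : ℤ) = d := by omega
          rw [hrw]
          exact hdne
        have hdp : ¬ (p : ℤ) ∣ ((dG : ℤ) - (M : ℤ)) := by
          have hrw : (dG : ℤ) - (M : ℤ) = d := by omega
          rw [hrw]
          exact hdnd
        have hmin : ∀ m, m < dG → PowerSeries.coeff m G ≠ 0 →
            (p : ℤ) ∣ ((m : ℤ) - (M : ℤ)) := by
          intro m hm hcm
          by_contra hnd
          rw [hG, PowerSeries.coeff_mk] at hcm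
          have := hdmin ((m : ℤ) - (M : ℤ)) ⟨hcm, hnd⟩
          omega
        exact core_contradiction W G M dG i hW0c hW1c hdeepW hbW hi1 heq hdcoeff hdp hmin
      · -- Frobenius descent
        push_neg at hstray
        set M0 : ℕ := g.order.natAbs + 1 with hM0
        set M : ℕ := p * M0 with hMdef
        have hM0le : M0 ≤ M := by
          calc M0 = 1 * M0 := by ring
          _ ≤ p * M0 := Nat.mul_le_mul hp.pos le_rfl
        have hMbig : g.order.natAbs + 1 ≤ M := by omega
        have hshift : ∀ t : ℤ, t < 0 → g.coeff (t - (M : ℤ)) = 0 := by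
          intro t ht
          apply HahnSeries.coeff_eq_zero_of_lt_order
          have hMB : (g.order.natAbs : ℤ) + 1 ≤ (M : ℤ) := by exact_mod_cast hMbig
          omega
        set G : PowerSeries k := PowerSeries.mk fun n => g.coeff ((n : ℤ) - (M : ℤ)) with hG
        have hxg : ofPS G = ofPS (PowerSeries.X ^ M) * g := ofPS_shift g M hshift
        have hGsupp : ∀ n, PowerSeries.coeff n G ≠ 0 → p ∣ n := by
          intro n hn
          rw [hG, PowerSeries.coeff_mk] at hn
          have h1 : (p : ℤ) ∣ ((n : ℤ) - (M : ℤ)) := hstray _ hn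
          have h2 : (p : ℤ) ∣ (M : ℤ) := by
            rw [hMdef]
            push_cast
            exact Dvd.intro _ rfl
          have h3 : (p : ℤ) ∣ (n : ℤ) := by
            have := dvd_add h1 h2
            simpa using this
          exact_mod_cast h3
        obtain ⟨H, hH⟩ := exists_pth_root_powerSeries G hGsupp
        have hxne : ofPS (PowerSeries.X ^ M0) ≠ 0 := by
          intro hc
          have hz : (PowerSeries.X : PowerSeries k) ^ M0 = 0 :=
            HahnSeries.ofPowerSeries_injective (by rw [hc]; exact (map_zero _).symm)
          exact pow_ne_zero M0 PowerSeries.X_ne_zero hz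
        set h : LaurentSeries k := ofPS H * (ofPS (PowerSeries.X ^ M0))⁻¹ with hh
        have hhp : h ^ p = g := by
          rw [hh, mul_pow, inv_pow, ← map_pow, ← map_pow, ← pow_mul, hH]
          have hXM : (PowerSeries.X : PowerSeries k) ^ (M0 * p) = PowerSeries.X ^ M := by
            rw [hMdef, mul_comm]
          rw [hXM, hxg]
          have hne : ofPS (PowerSeries.X ^ M) ≠ 0 := by
            rw [show (PowerSeries.X : PowerSeries k) ^ M = PowerSeries.X ^ (M0 * p) from
              hXM.symm, pow_mul, map_pow]
            exact pow_ne_zero _ hxne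
          rw [mul_comm (ofPS (PowerSeries.X ^ M)) g, mul_assoc, mul_inv_cancel₀ hne, mul_one]
        have hhg : h ≠ 0 := by
          intro hc
          apply hg0
          rw [← hhp, hc, zero_pow hp.ne_zero]
        have hfixh : γ h = h := by
          have h1 : (γ h) ^ p = h ^ p := by
            rw [← map_pow, hhp, hfix, ← hhp]
          have h2 : (γ h - h) ^ p = 0 := by
            rw [sub_pow_char, h1, sub_self]
          have h3 : γ h - h = 0 := pow_eq_zero_iff hp.ne_zero |>.1 h2
          exact sub_eq_zero.1 h3
        set c : k := h.coeff 0 with hc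
        set h' : LaurentSeries k := h - HahnSeries.C c with hh'
        have hfixh' : γ h' = h' := by rw [hh', map_sub, hfixh, hfixC]
        have h'0 : h'.coeff 0 = 0 := by
          rw [hh', HahnSeries.coeff_sub, HahnSeries.C_apply, HahnSeries.coeff_single_same, hc,
            sub_self]
        have hordgh : g.order = (p : ℤ) * h.order := by
          rw [← hhp, HahnSeries.order_pow, nsmul_eq_mul]
        have hordh : h.order ≠ 0 := by
          intro hz
          rw [hz, mul_zero] at hordgh
          exact hordne hordgh
        have hlt : h.order.natAbs < g.order.natAbs := by
          have habs : g.order.natAbs = p * h.order.natAbs := by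
            rw [hordgh, Int.natAbs_mul, Int.natAbs_natCast]
          have h1 : 1 ≤ h.order.natAbs := by omega
          have h2 : 2 ≤ p := hp.two_le
          nlinarith
        by_cases hc0 : c = 0
        · have hh'' : h = 0 := by
            apply IH h.order.natAbs (by omega) h le_rfl hfixh
            rw [← hc]
            exact hc0
          exact hg0 (by rw [← hhp, hh'', zero_pow hp.ne_zero])
        · have hch0 : h.coeff 0 ≠ 0 := by rw [← hc]; exact hc0
          have hordh_le : h.order ≤ 0 := HahnSeries.order_le_of_coeff_ne_zero hch0
          have hordh_neg : h.order < 0 := lt_of_le_of_ne hordh_le hordh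
          have hh'ne : h' ≠ 0 := by
            intro hz
            have hhC : h = HahnSeries.C c := by
              rw [← sub_eq_zero]
              exact hz
            have hgC : g = HahnSeries.C (c ^ p) := by rw [← hhp, hhC, ← map_pow]
            apply hc0
            rw [hgC, HahnSeries.C_apply, HahnSeries.coeff_single_same] at h0
            exact pow_eq_zero_iff hp.ne_zero |>.1 h0
          have hcoeffh' : ∀ t : ℤ, t ≠ 0 → h'.coeff t = h.coeff t := by
            intro t ht
            rw [hh', HahnSeries.coeff_sub, HahnSeries.C_apply,
              HahnSeries.coeff_single_of_ne ht, sub_zero]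
          have hordh' : h'.order = h.order := by
            apply le_antisymm
            · apply HahnSeries.order_le_of_coeff_ne_zero
              rw [hcoeffh' h.order (by omega)]
              exact mt HahnSeries.coeff_order_eq_zero.1 hhg
            · by_contra hlt2
              push_neg at hlt2
              apply mt HahnSeries.coeff_order_eq_zero.1 hh'ne
              rw [hcoeffh' h'.order ?_]
              · exact HahnSeries.coeff_eq_zero_of_lt_order hlt2
              · have : h'.order < 0 := lt_trans hlt2 hordh_neg
                omega
          have hz' : h' = 0 := by
            apply IH h.order.natAbs (by omega) h' _ hfixh' h'0
            rw [hordh']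
          exact hh'ne hz'
  -- conclusion
  intro f hf
  set c : k := f.coeff 0 with hc
  refine ⟨c, ?_⟩
  have hg : γ (f - HahnSeries.C c) = f - HahnSeries.C c := by
    rw [map_sub, hf, hfixC]
  have h0 : (f - HahnSeries.C c).coeff 0 = 0 := by
    rw [HahnSeries.coeff_sub, HahnSeries.C_apply, HahnSeries.coeff_single_same, hc, sub_self]
  have hz := main (f - HahnSeries.C c).order.natAbs (f - HahnSeries.C c) le_rfl hg h0
  rw [sub_eq_zero] at hz
  exact hz
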